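/- arXiv:1407.2791 — 2 statements merged into one kernel-verified Lean document; each statement's English description precedes it below -/
import Mathlib

section
/- Define v₁ = sup{ min{2p₁/(1+2p₂), p₂/(1+p₁)} : p₁, p₂ ∈ [0,1] }, v₂ = sup{ min{p₁/(1+p₂), 2p₂/(1+2p₁)} : p₁, p₂ ∈ [0,1] }, v₃ = sup{ min{2p₁/(1+2p₂), p₂/(1+p₁)} : p₁, p₂ ≥ 0, p₁+p₂ ≤ 1 }, and v₄ = sup{ min{p₁/(1+p₂), 2p₂/(1+2p₁)} : p₁, p₂ ≥ 0, p₁+p₂ ≤ 1 }. Then v₁ = v₂ = (√7 − 1)/3, v₃ = v₄ = 2/5, and hence the optimal min-SINR of the subnetwork, max{v₁, v₂, v₃, v₄}, equals (√7 − 1)/3; moreover v₁ is attained at (p₁, p₂) = ((√7 − 1)/2, 1) and v₂ at (p₁, p₂) = (1, (√7 − 1)/2). -/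
private lemma sqrt7_sq : Real.sqrt 7 ^ 2 = 7 := Real.sq_sqrt (by norm_num)
private lemma sqrt7_lb : (2:ℝ) < Real.sqrt 7 := by
  nlinarith [Real.sq_sqrt (show (0:ℝ) ≤ 7 by norm_num), Real.sqrt_nonneg 7]
private lemma sqrt7_ub : Real.sqrt 7 < 3 := by
  nlinarith [Real.sq_sqrt (show (0:ℝ) ≤ 7 by norm_num), Real.sqrt_nonneg 7]

private lemma greatest1 : IsGreatest {γ : ℝ | ∃ p₁ p₂ : ℝ, p₁ ∈ Set.Icc (0:ℝ) 1 ∧ p₂ ∈ Set.Icc (0:ℝ) 1 ∧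
    γ = min (2 * p₁ / (1 + 2 * p₂)) (p₂ / (1 + p₁))} ((Real.sqrt 7 - 1) / 3) := by
  have hs := sqrt7_sq; have h2 := sqrt7_lb; have h3 := sqrt7_ub
  constructor
  · refine ⟨(Real.sqrt 7 - 1) / 2, 1, ⟨by nlinarith, by nlinarith⟩, ⟨by norm_num, le_refl 1⟩, ?_⟩
    have e1 : 2 * ((Real.sqrt 7 - 1) / 2) / (1 + 2 * 1) = (Real.sqrt 7 - 1) / 3 := by ring
    have e2 : (1:ℝ) / (1 + (Real.sqrt 7 - 1) / 2) = (Real.sqrt 7 - 1) / 3 := by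
      rw [div_eq_div_iff (by nlinarith) (by norm_num)]; nlinarith
    rw [e1, e2, min_self]
  · rintro γ ⟨p₁, p₂, ⟨hp1, hp1'⟩, ⟨hp2, hp2'⟩, rfl⟩
    set c : ℝ := (Real.sqrt 7 - 1) / 3 with hc
    have hcpos : 0 < c := by rw [hc]; nlinarith
    have hceq : 3 * c ^ 2 + 2 * c - 2 = 0 := by rw [hc]; nlinarith
    by_contra h
    push_neg at h
    have h1 : c < 2 * p₁ / (1 + 2 * p₂) := lt_of_lt_of_le h (min_le_left _ _)
    have h2' : c < p₂ / (1 + p₁) := lt_of_lt_of_le h (min_le_right _ _)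
    rw [lt_div_iff₀ (by linarith)] at h1 h2'
    nlinarith [mul_lt_mul_of_pos_left h2' hcpos, mul_nonneg hcpos.le hp1]

private lemma greatest2 : IsGreatest {γ : ℝ | ∃ p₁ p₂ : ℝ, p₁ ∈ Set.Icc (0:ℝ) 1 ∧ p₂ ∈ Set.Icc (0:ℝ) 1 ∧
    γ = min (p₁ / (1 + p₂)) (2 * p₂ / (1 + 2 * p₁))} ((Real.sqrt 7 - 1) / 3) := by
  have hs := sqrt7_sq; have h2 := sqrt7_lb; have h3 := sqrt7_ub
  constructor
  · refine ⟨1, (Real.sqrt 7 - 1) / 2, ⟨by norm_num, le_refl 1⟩, ⟨by nlinarith, by nlinarith⟩, ?_⟩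
    have e1 : 2 * ((Real.sqrt 7 - 1) / 2) / (1 + 2 * 1) = (Real.sqrt 7 - 1) / 3 := by ring
    have e2 : (1:ℝ) / (1 + (Real.sqrt 7 - 1) / 2) = (Real.sqrt 7 - 1) / 3 := by
      rw [div_eq_div_iff (by nlinarith) (by norm_num)]; nlinarith
    rw [e1, e2, min_self]
  · rintro γ ⟨p₁, p₂, ⟨hp1, hp1'⟩, ⟨hp2, hp2'⟩, rfl⟩
    set c : ℝ := (Real.sqrt 7 - 1) / 3 with hc
    have hcpos : 0 < c := by rw [hc]; nlinarith
    have hceq : 3 * c ^ 2 + 2 * c - 2 = 0 := by rw [hc]; nlinarith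
    by_contra h
    push_neg at h
    have h1 : c < p₁ / (1 + p₂) := lt_of_lt_of_le h (min_le_left _ _)
    have h2' : c < 2 * p₂ / (1 + 2 * p₁) := lt_of_lt_of_le h (min_le_right _ _)
    rw [lt_div_iff₀ (by linarith)] at h1 h2'
    nlinarith [mul_lt_mul_of_pos_left h1 hcpos, mul_nonneg hcpos.le hp2]

private lemma greatest3 : IsGreatest {γ : ℝ | ∃ p₁ p₂ : ℝ, 0 ≤ p₁ ∧ 0 ≤ p₂ ∧ p₁ + p₂ ≤ 1 ∧
    γ = min (2 * p₁ / (1 + 2 * p₂)) (p₂ / (1 + p₁))} (2 / 5) := by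
  constructor
  · exact ⟨3/7, 4/7, by norm_num, by norm_num, by norm_num, by norm_num⟩
  · rintro γ ⟨p₁, p₂, hp1, hp2, hsum, rfl⟩
    by_contra h
    push_neg at h
    have h1 : (2:ℝ)/5 < 2 * p₁ / (1 + 2 * p₂) := lt_of_lt_of_le h (min_le_left _ _)
    have h2 : (2:ℝ)/5 < p₂ / (1 + p₁) := lt_of_lt_of_le h (min_le_right _ _)
    rw [lt_div_iff₀ (by linarith)] at h1 h2
    linarith

private lemma greatest4 : IsGreatest {γ : ℝ | ∃ p₁ p₂ : ℝ, 0 ≤ p₁ ∧ 0 ≤ p₂ ∧ p₁ + p₂ ≤ 1 ∧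
    γ = min (p₁ / (1 + p₂)) (2 * p₂ / (1 + 2 * p₁))} (2 / 5) := by
  constructor
  · exact ⟨4/7, 3/7, by norm_num, by norm_num, by norm_num, by norm_num⟩
  · rintro γ ⟨p₁, p₂, hp1, hp2, hsum, rfl⟩
    by_contra h
    push_neg at h
    have h1 : (2:ℝ)/5 < p₁ / (1 + p₂) := lt_of_lt_of_le h (min_le_left _ _)
    have h2 : (2:ℝ)/5 < 2 * p₂ / (1 + 2 * p₁) := lt_of_lt_of_le h (min_le_right _ _)
    rw [lt_div_iff₀ (by linarith)] at h1 h2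
    linarith

/-- The four configurations of the two-user, two-BS subnetwork (gains f = 2, g = 1):
the per-BS configurations have optimal value `(√7 − 1)/3` (attained at the stated
power vectors), the sum-power configurations have optimal value `2/5`, and the
overall optimal min-SINR of the subnetwork is `(√7 − 1)/3`. -/
theorem subnetwork_four_configurations :
    let v₁ : ℝ := sSup {γ : ℝ | ∃ p₁ p₂ : ℝ, p₁ ∈ Set.Icc (0:ℝ) 1 ∧ p₂ ∈ Set.Icc (0:ℝ) 1 ∧
        γ = min (2 * p₁ / (1 + 2 * p₂)) (p₂ / (1 + p₁))}
    let v₂ : ℝ := sSup {γ : ℝ | ∃ p₁ p₂ : ℝ, p₁ ∈ Set.Icc (0:ℝ) 1 ∧ p₂ ∈ Set.Icc (0:ℝ) 1 ∧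
        γ = min (p₁ / (1 + p₂)) (2 * p₂ / (1 + 2 * p₁))}
    let v₃ : ℝ := sSup {γ : ℝ | ∃ p₁ p₂ : ℝ, 0 ≤ p₁ ∧ 0 ≤ p₂ ∧ p₁ + p₂ ≤ 1 ∧
        γ = min (2 * p₁ / (1 + 2 * p₂)) (p₂ / (1 + p₁))}
    let v₄ : ℝ := sSup {γ : ℝ | ∃ p₁ p₂ : ℝ, 0 ≤ p₁ ∧ 0 ≤ p₂ ∧ p₁ + p₂ ≤ 1 ∧
        γ = min (p₁ / (1 + p₂)) (2 * p₂ / (1 + 2 * p₁))}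
    v₁ = (Real.sqrt 7 - 1) / 3 ∧ v₂ = (Real.sqrt 7 - 1) / 3 ∧
    v₃ = 2 / 5 ∧ v₄ = 2 / 5 ∧
    max (max v₁ v₂) (max v₃ v₄) = (Real.sqrt 7 - 1) / 3 ∧
    min (2 * ((Real.sqrt 7 - 1) / 2) / (1 + 2 * 1))
        ((1 : ℝ) / (1 + (Real.sqrt 7 - 1) / 2)) = v₁ ∧
    min ((1 : ℝ) / (1 + (Real.sqrt 7 - 1) / 2))
        (2 * ((Real.sqrt 7 - 1) / 2) / (1 + 2 * 1)) = v₂ := by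
  intro v₁ v₂ v₃ v₄
  have hs := sqrt7_sq; have h2 := sqrt7_lb; have h3 := sqrt7_ub
  have hv1 : v₁ = (Real.sqrt 7 - 1) / 3 := greatest1.csSup_eq
  have hv2 : v₂ = (Real.sqrt 7 - 1) / 3 := greatest2.csSup_eq
  have hv3 : v₃ = 2 / 5 := greatest3.csSup_eq
  have hv4 : v₄ = 2 / 5 := greatest4.csSup_eq
  have e1 : 2 * ((Real.sqrt 7 - 1) / 2) / (1 + 2 * 1) = (Real.sqrt 7 - 1) / 3 := by ring
  have e2 : (1:ℝ) / (1 + (Real.sqrt 7 - 1) / 2) = (Real.sqrt 7 - 1) / 3 := by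
    rw [div_eq_div_iff (by nlinarith) (by norm_num)]; nlinarith
  refine ⟨hv1, hv2, hv3, hv4, ?_, ?_, ?_⟩
  · rw [hv1, hv2, hv3, hv4]
    rw [max_self]
    rw [max_self]
    rw [max_eq_left (by nlinarith)]
  · rw [e1, e2, min_self, hv1]
  · rw [e1, e2, min_self, hv2]
end

section
/- For any positive weights α_n > 0 (n = 1,…,N), the optimal value of the per-BS power constrained downlink problem is bounded above by the optimal value of the rescaled sum-power relaxation: val P(g_{n,k}, p̄_n) ≤ val P_sum(g_{n,k}/α_n, Σ_{n=1}^N α_n p̄_n). -/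
open Finset

/-- Downlink SINR of user `k` under power vector `p` and BS association `a`. -/
noncomputable def SINRdl {N K : ℕ} (g : Fin N → Fin K → ℝ) (σsq : Fin K → ℝ)
    (p : Fin K → ℝ) (a : Fin K → Fin N) (k : Fin K) : ℝ :=
  p k * g (a k) k / (σsq k + ∑ j ∈ Finset.univ.erase k, p j * g (a j) k)

/-- Optimal value of the per-BS power constrained downlink problem P(g, p̄). -/
noncomputable def valP {N K : ℕ} (g : Fin N → Fin K → ℝ) (σsq : Fin K → ℝ)
    (pbar : Fin N → ℝ) : ℝ :=
  sSup {γ | ∃ (p : Fin K → ℝ) (a : Fin K → Fin N),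
    (∀ k, 0 ≤ p k) ∧
    (∀ n, ∑ k ∈ Finset.univ.filter (fun k => a k = n), p k ≤ pbar n) ∧
    γ = ⨅ k, SINRdl g σsq p a k}

/-- Optimal value of the sum-power constrained downlink problem P_sum(g, S). -/
noncomputable def valPsum {N K : ℕ} (g : Fin N → Fin K → ℝ) (σsq : Fin K → ℝ)
    (S : ℝ) : ℝ :=
  sSup {γ | ∃ (p : Fin K → ℝ) (a : Fin K → Fin N),
    (∀ k, 0 ≤ p k) ∧ (∑ k, p k ≤ S) ∧
    γ = ⨅ k, SINRdl g σsq p a k}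

/-- For any positive weights `α_n`, the per-BS power constrained optimal value is
bounded above by the optimal value of the rescaled sum-power relaxation. -/
theorem valP_le_rescaled_sum_relaxation (N K : ℕ) (hN : 0 < N) (hK : 0 < K)
    (g : Fin N → Fin K → ℝ) (hg : ∀ n k, 0 < g n k)
    (σsq : Fin K → ℝ) (hσ : ∀ k, 0 < σsq k)
    (pbar : Fin N → ℝ) (hpbar : ∀ n, 0 < pbar n)
    (α : Fin N → ℝ) (hα : ∀ n, 0 < α n) :
    valP g σsq pbar
      ≤ valPsum (fun n k => g n k / α n) σsq (∑ n, α n * pbar n) := by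
  classical
  have hNe : (Finset.univ : Finset (Fin N)).Nonempty := ⟨⟨0, hN⟩, Finset.mem_univ _⟩
  have hKe : Nonempty (Fin K) := ⟨⟨0, hK⟩⟩
  set k0 : Fin K := ⟨0, hK⟩ with hk0
  set S : ℝ := ∑ n, α n * pbar n with hS
  have hS0 : 0 ≤ S := Finset.sum_nonneg fun n _ => le_of_lt (mul_pos (hα n) (hpbar n))
  set M : ℝ := Finset.univ.sup' hNe (fun n => g n k0 / α n) with hM
  have hM0 : 0 ≤ M := by
    refine le_trans (le_of_lt (div_pos (hg ⟨0, hN⟩ k0) (hα ⟨0, hN⟩))) ?_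
    exact Finset.le_sup' (fun n => g n k0 / α n) (Finset.mem_univ _)
  set B : ℝ := S * M / σsq k0 with hB
  -- the Psum feasible-value set is bounded above by B
  have hbdd : ∀ γ ∈ {γ | ∃ (p : Fin K → ℝ) (a : Fin K → Fin N),
      (∀ k, 0 ≤ p k) ∧ (∑ k, p k ≤ S) ∧
      γ = ⨅ k, SINRdl (fun n k => g n k / α n) σsq p a k}, γ ≤ B := by
    rintro γ ⟨p, a, hp, hsum, rfl⟩
    have h1 : (⨅ k, SINRdl (fun n k => g n k / α n) σsq p a k)
        ≤ SINRdl (fun n k => g n k / α n) σsq p a k0 :=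
      ciInf_le (Finite.bddBelow_range _) k0
    refine h1.trans ?_
    unfold SINRdl
    have hnum : p k0 * (g (a k0) k0 / α (a k0)) ≤ S * M := by
      have hp0 : p k0 ≤ S :=
        le_trans (Finset.single_le_sum (fun j _ => hp j) (Finset.mem_univ k0)) hsum
      have hgM : g (a k0) k0 / α (a k0) ≤ M := Finset.le_sup' (fun n => g n k0 / α n) (Finset.mem_univ _)
      exact mul_le_mul hp0 hgM (le_of_lt (div_pos (hg _ _) (hα _))) hS0
    have hden : σsq k0 ≤ σsq k0 + ∑ j ∈ Finset.univ.erase k0,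
        p j * (g (a j) k0 / α (a j)) := by
      refine le_add_of_nonneg_right (Finset.sum_nonneg fun j _ =>
        mul_nonneg (hp j) (le_of_lt (div_pos (hg _ _) (hα _))))
    exact div_le_div₀ (mul_nonneg hS0 hM0) hnum (hσ k0) hden
  -- the P feasible-value set is nonempty
  have hne : ({γ | ∃ (p : Fin K → ℝ) (a : Fin K → Fin N),
      (∀ k, 0 ≤ p k) ∧
      (∀ n, ∑ k ∈ Finset.univ.filter (fun k => a k = n), p k ≤ pbar n) ∧
      γ = ⨅ k, SINRdl g σsq p a k} : Set ℝ).Nonempty := by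
    refine ⟨⨅ k, SINRdl g σsq (fun _ => 0) (fun _ => ⟨0, hN⟩) k,
      fun _ => 0, fun _ => ⟨0, hN⟩, fun k => le_refl 0, fun n => ?_, rfl⟩
    simp [le_of_lt (hpbar n)]
  unfold valP valPsum
  refine csSup_le_csSup ⟨B, hbdd⟩ hne ?_
  rintro γ ⟨p, a, hp, hpow, rfl⟩
  refine ⟨fun k => α (a k) * p k, a, fun k => mul_nonneg (le_of_lt (hα (a k))) (hp k), ?_, ?_⟩
  · have h1 : ∑ k, α (a k) * p k
        = ∑ n, ∑ k ∈ Finset.univ.filter (fun k => a k = n), α (a k) * p k := by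
      exact (Finset.sum_fiberwise _ _ _).symm
    rw [h1]
    refine Finset.sum_le_sum fun n _ => ?_
    have h2 : ∑ k ∈ Finset.univ.filter (fun k => a k = n), α (a k) * p k
        = α n * ∑ k ∈ Finset.univ.filter (fun k => a k = n), p k := by
      rw [Finset.mul_sum]
      refine Finset.sum_congr rfl fun k hk => ?_
      rw [(Finset.mem_filter.mp hk).2]
    rw [h2]
    exact mul_le_mul_of_nonneg_left (hpow n) (le_of_lt (hα n))
  · refine iInf_congr fun k => ?_
    unfold SINRdl
    have hterm : ∀ j, α (a j) * p j * (g (a j) k / α (a j)) = p j * g (a j) k := by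
      intro j
      field_simp [(hα (a j)).ne']
    rw [hterm k]
    congr 2
    exact Finset.sum_congr rfl fun j _ => (hterm j).symm
end
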